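/- The spectrum is 2-Lipschitz: for finite networks X and Y, the Hausdorff distance in ℝ between spec(X) = {ωX(x,x') : x,x' ∈ X} and spec(Y) = {ωY(y,y') : y,y' ∈ Y} is at most 2 dN(X,Y). -/

import Mathlib

open scoped ENNReal
open Function

/-- A correspondence between `X` and `Y`: a relation with full projections. -/
def IsCorrespondence {X Y : Type*} (R : Set (X × Y)) : Prop :=
  (∀ x : X, ∃ y : Y, (x, y) ∈ R) ∧ (∀ y : Y, ∃ x : X, (x, y) ∈ R)

/-- Distortion of a relation between two networks. -/
noncomputable def dis {X Y : Type*} (ωX : X → X → ℝ) (ωY : Y → Y → ℝ)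
    (R : Set (X × Y)) : ℝ≥0∞ :=
  ⨆ p ∈ R, ⨆ q ∈ R, (‖ωX p.1 q.1 - ωY p.2 q.2‖₊ : ℝ≥0∞)

/-- The network distance. -/
noncomputable def dN {X Y : Type*} (ωX : X → X → ℝ) (ωY : Y → Y → ℝ) : ℝ≥0∞ :=
  (1/2) * ⨅ R ∈ {R : Set (X × Y) | IsCorrespondence R}, dis ωX ωY R

/-!
Each correspondence `R` matches every value `ωX x x'` with a value `ωY y y'`, where `(x, y)` and
`(x', y')` lie in `R`, at distance at most `dis R`, and symmetrically. Hence the Hausdorff distance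
of the spectra is at most `dis R` for every correspondence, i.e. at most `2 * dN`.
-/

section Network

variable {X Y : Type*} (ωX : X → X → ℝ) (ωY : Y → Y → ℝ)

theorem two_mul_dN :
    2 * dN ωX ωY = ⨅ R ∈ {R : Set (X × Y) | IsCorrespondence R}, dis ωX ωY R := by
  rw [dN, ← mul_assoc, one_div, ENNReal.mul_inv_cancel two_ne_zero ENNReal.ofNat_ne_top, one_mul]

variable {ωX ωY}

theorem edist_le_dis {R : Set (X × Y)} {p q : X × Y} (hp : p ∈ R) (hq : q ∈ R) :
    edist (ωX p.1 q.1) (ωY p.2 q.2) ≤ dis ωX ωY R := by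
  rw [edist_eq_enorm_sub]
  exact le_iSup₂_of_le p hp (le_iSup₂_of_le q hq le_rfl)

theorem IsCorrespondence.hausdorffEDist_le_dis {R : Set (X × Y)} (hR : IsCorrespondence R) :
    Metric.hausdorffEDist {r : ℝ | ∃ x x' : X, r = ωX x x'}
      {r : ℝ | ∃ y y' : Y, r = ωY y y'} ≤ dis ωX ωY R := by
  refine Metric.hausdorffEDist_le_of_mem_edist ?_ ?_
  · rintro _ ⟨x, x', rfl⟩
    obtain ⟨y, hy⟩ := hR.1 x
    obtain ⟨y', hy'⟩ := hR.1 x'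
    exact ⟨ωY y y', ⟨y, y', rfl⟩, edist_le_dis hy hy'⟩
  · rintro _ ⟨y, y', rfl⟩
    obtain ⟨x, hx⟩ := hR.2 y
    obtain ⟨x', hx'⟩ := hR.2 y'
    exact ⟨ωX x x', ⟨x, x', rfl⟩, edist_comm (ωX x x') _ ▸ edist_le_dis hx hx'⟩

end Network

theorem spec_lipschitz_general {X Y : Type*} (ωX : X → X → ℝ) (ωY : Y → Y → ℝ) :
    EMetric.hausdorffEdist {r : ℝ | ∃ x x' : X, r = ωX x x'}
      {r : ℝ | ∃ y y' : Y, r = ωY y y'} ≤ 2 * dN ωX ωY := by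
  rw [two_mul_dN]
  exact le_iInf₂ fun _ hR => hR.hausdorffEDist_le_dis

theorem spec_lipschitz {X Y : Type*} [Fintype X] [Fintype Y]
    [Nonempty X] [Nonempty Y] (ωX : X → X → ℝ) (ωY : Y → Y → ℝ) :
    EMetric.hausdorffEdist {r : ℝ | ∃ x x' : X, r = ωX x x'}
      {r : ℝ | ∃ y y' : Y, r = ωY y y'} ≤ 2 * dN ωX ωY :=
  spec_lipschitz_general ωX ωY
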